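/- arXiv:2410.09344 — 4 statements merged into one kernel-verified Lean document; each statement's English description precedes it below -/
import Mathlib

section
/- Define Φ : (0,1) → ℝ by Φ(x) = (1-2x)/log((1-x)/x) for x ≠ 1/2 and Φ(1/2) = 1/2. Then Φ(x) ≤ 1/2 for all x ∈ (0,1). -/
noncomputable def kearnsSaulPhi (x : ℝ) : ℝ :=
  if x = 1 / 2 then 1 / 2 else (1 - 2 * x) / Real.log ((1 - x) / x)

/-!
With `t = 1 - 2x` we have `Φ(x) = t / log ((1 + t) / (1 - t))`. Multiplying the odd series
`log ((1 + t) / (1 - t)) = ∑ 2 t^(2k+1) / (2k+1)` by `t` gives a series of nonnegative terms whose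
first term is `2 t²`, so `t · log ((1 + t) / (1 - t)) ≥ 2 t²`, which is `Φ ≤ 1/2`.
-/

open Real

theorem two_mul_sq_le_mul_log_div {t : ℝ} (ht : |t| < 1) :
    2 * t ^ 2 ≤ t * log ((1 + t) / (1 - t)) := by
  have hpos : 0 < 1 + t := by linarith [neg_abs_le t]
  have hpos' : 0 < 1 - t := by linarith [le_abs_self t]
  rw [log_div hpos.ne' hpos'.ne']
  have hsum := (hasSum_log_sub_log_of_abs_lt_one ht).mul_left t
  have hterm : ∀ k : ℕ, t * (2 * (1 / (2 * k + 1)) * t ^ (2 * k + 1))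
      = 2 * (1 / (2 * k + 1)) * (t ^ 2) ^ (k + 1) := fun k => by ring
  simp only [hterm] at hsum
  simpa using le_hasSum hsum 0 fun k _ => by positivity

theorem div_log_div_le_half {t : ℝ} (ht : |t| < 1) :
    t / log ((1 + t) / (1 - t)) ≤ 1 / 2 := by
  rcases eq_or_ne t 0 with rfl | ht0
  · norm_num
  have hsq : 0 < t ^ 2 := by positivity
  have key := two_mul_sq_le_mul_log_div ht
  have hprod : 0 < t * log ((1 + t) / (1 - t)) := by linarith
  calc t / log ((1 + t) / (1 - t)) = t ^ 2 / (t * log ((1 + t) / (1 - t))) := by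
        rw [sq, mul_div_mul_left _ _ ht0]
    _ ≤ 1 / 2 := by rw [div_le_iff₀ hprod]; linarith

theorem kearnsSaulPhi_le_half :
    ∀ x ∈ Set.Ioo (0 : ℝ) 1, kearnsSaulPhi x ≤ 1 / 2 := by
  rintro x ⟨hx0, hx1⟩
  rw [kearnsSaulPhi]
  split_ifs
  · exact le_rfl
  have hratio : (1 - x) / x = (1 + (1 - 2 * x)) / (1 - (1 - 2 * x)) := by
    field_simp
    ring
  rw [hratio]
  exact div_log_div_le_half (abs_lt.2 ⟨by linarith, by linarith⟩)
end

section
/- (Kearns–Saul moment bound for a single Bernoulli) For any p ∈ (0,1), any real α, and any s ∈ ℝ: p·exp(s·α·(1-p)) + (1-p)·exp(-s·α·p) ≤ exp(s²α²·Φ(p)/4), where Φ(p) = (1-2p)/log((1-p)/p) for p ≠ 1/2 and Φ(1/2) = 1/2. -/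
open Real Set

theorem Real.hasDerivAt_tanh (x : ℝ) : HasDerivAt tanh (1 / cosh x ^ 2) x := by
  have h := (hasDerivAt_sinh x).div (hasDerivAt_cosh x) (cosh_pos x).ne'
  rw [show sinh / cosh = tanh from funext fun y => (tanh_eq_sinh_div_cosh y).symm] at h
  refine h.congr_deriv ?_
  rw [← cosh_sq_sub_sinh_sq x]
  ring

theorem Real.concaveOn_tanh : ConcaveOn ℝ (Ici 0) tanh := by
  have hderiv : deriv tanh = fun x => 1 / cosh x ^ 2 := funext fun x => (hasDerivAt_tanh x).deriv
  refine AntitoneOn.concaveOn_of_deriv (convex_Ici 0)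
    (fun x _ => (hasDerivAt_tanh x).continuousAt.continuousWithinAt)
    (fun x _ => (hasDerivAt_tanh x).differentiableAt.differentiableWithinAt) ?_
  rw [hderiv, interior_Ici]
  intro x hx y hy hxy
  have hc : cosh x ≤ cosh y := cosh_le_cosh.2 (by rw [abs_of_pos hx, abs_of_pos hy]; exact hxy)
  have := cosh_pos x
  show 1 / cosh y ^ 2 ≤ 1 / cosh x ^ 2
  gcongr

theorem Real.mul_tanh_le_mul_tanh {a b : ℝ} (ha : 0 ≤ a) (hab : a ≤ b) :
    a * tanh b ≤ b * tanh a := by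
  rcases hab.eq_or_lt with rfl | hab
  · rfl
  have hb : 0 < b := ha.trans_lt hab
  have h := concaveOn_tanh.2 (mem_Ici.2 hb.le) (mem_Ici.2 le_rfl) (div_nonneg ha hb.le)
    (sub_nonneg.2 ((div_le_one hb).2 hab.le)) (add_sub_cancel _ _)
  simp only [smul_eq_mul, mul_zero, add_zero, tanh_zero, div_mul_cancel₀ a hb.ne'] at h
  rw [div_mul_eq_mul_div, div_le_iff₀ hb] at h
  linarith

theorem log_cosh_half_sub_mul_sq_le_of_pos {w y : ℝ} (hw : 0 < w) (hy : 0 ≤ y) :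
    log (cosh (y / 2)) - tanh (w / 2) / (4 * w) * y ^ 2 ≤
      log (cosh (w / 2)) - tanh (w / 2) / (4 * w) * w ^ 2 := by
  set c := tanh (w / 2) / (4 * w)
  have hF (x : ℝ) : HasDerivAt (fun x => log (cosh (x / 2)) - c * x ^ 2)
      ((w * tanh (x / 2) - x * tanh (w / 2)) / (2 * w)) x := by
    have h := (((hasDerivAt_id x).div_const 2).cosh.log (cosh_pos _).ne').sub
      ((hasDerivAt_pow 2 x).const_mul c)
    refine h.congr_deriv ?_
    simp only [id, tanh_eq_sinh_div_cosh, c]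
    field_simp
    ring
  have hcont : Continuous fun x => log (cosh (x / 2)) - c * x ^ 2 :=
    continuous_iff_continuousAt.2 fun x => (hF x).continuousAt
  rcases le_total y w with hyw | hwy
  · refine monotoneOn_of_hasDerivWithinAt_nonneg (convex_Icc 0 w) hcont.continuousOn
      (fun x _ => (hF x).hasDerivWithinAt) (fun x hx => ?_) ⟨hy, hyw⟩ ⟨hw.le, le_rfl⟩ hyw
    rw [interior_Icc] at hx
    have := mul_tanh_le_mul_tanh (b := w / 2) (half_pos hx.1).le (by linarith [hx.2])
    apply div_nonneg _ (by positivity)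
    linarith
  · refine antitoneOn_of_hasDerivWithinAt_nonpos (convex_Ici w) hcont.continuousOn
      (fun x _ => (hF x).hasDerivWithinAt) (fun x hx => ?_) (mem_Ici.2 le_rfl) hwy hwy
    rw [interior_Ici] at hx
    have := mul_tanh_le_mul_tanh (b := x / 2) (half_pos hw).le (by linarith [mem_Ioi.1 hx])
    apply div_nonpos_of_nonpos_of_nonneg _ (by positivity)
    linarith

theorem log_cosh_half_sub_mul_sq_le {w : ℝ} (hw : w ≠ 0) (y : ℝ) :
    log (cosh (y / 2)) - tanh (w / 2) / (4 * w) * y ^ 2 ≤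
      log (cosh (w / 2)) - tanh (w / 2) / (4 * w) * w ^ 2 := by
  have h := log_cosh_half_sub_mul_sq_le_of_pos (abs_pos.2 hw) (abs_nonneg y)
  have hc : tanh (|w| / 2) / (4 * |w|) = tanh (w / 2) / (4 * w) := by
    rcases abs_choice w with h | h <;> rw [h]
    rw [neg_div, tanh_neg, mul_neg, neg_div_neg_eq]
  have hcosh (x : ℝ) : cosh (|x| / 2) = cosh (x / 2) := by rw [← cosh_abs (x / 2), abs_div, abs_two]
  rwa [hc, sq_abs, sq_abs, hcosh, hcosh] at h

theorem exp_mul_tanh_half_mul_cosh_le {w : ℝ} (hw : w ≠ 0) (t : ℝ) :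
    exp (t * tanh (w / 2) / 2) * (cosh ((t - w) / 2) / cosh (w / 2)) ≤
      exp (t ^ 2 * (tanh (w / 2) / w) / 4) := by
  have h := log_cosh_half_sub_mul_sq_le hw (t - w)
  have hratio : cosh ((t - w) / 2) / cosh (w / 2) =
      exp (log (cosh ((t - w) / 2)) - log (cosh (w / 2))) := by
    rw [exp_sub, exp_log (cosh_pos _), exp_log (cosh_pos _)]
  rw [hratio, ← exp_add, exp_le_exp]
  have hexp : t ^ 2 * (tanh (w / 2) / w) / 4 = t * tanh (w / 2) / 2 +
      tanh (w / 2) / (4 * w) * ((t - w) ^ 2 - w ^ 2) := by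
    field_simp
    ring
  rw [hexp]
  linarith

theorem exp_log_div_two_sq {x : ℝ} (hx : 0 < x) : exp (log x / 2) ^ 2 = x := by
  rw [← exp_nat_mul, Nat.cast_two, mul_div_cancel₀ _ two_ne_zero, exp_log hx]

theorem tanh_half_log_one_sub_div {p : ℝ} (hp : p ∈ Ioo 0 1) :
    tanh (log ((1 - p) / p) / 2) = 1 - 2 * p := by
  obtain ⟨hp0, hp1⟩ := hp
  have ha := exp_log_div_two_sq (div_pos (sub_pos.2 hp1) hp0)
  rw [tanh_eq, exp_neg]
  field_simp
  rw [ha]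
  field_simp
  ring

theorem bernoulli_mgf_eq_cosh {p : ℝ} (hp : p ∈ Ioo 0 1) (t : ℝ) :
    p * exp (t * (1 - p)) + (1 - p) * exp (-(t * p)) =
      exp (t * (1 - 2 * p) / 2) *
        (cosh ((t - log ((1 - p) / p)) / 2) / cosh (log ((1 - p) / p) / 2)) := by
  obtain ⟨hp0, hp1⟩ := hp
  have ha := exp_log_div_two_sq (div_pos (sub_pos.2 hp1) hp0)
  set a := exp (log ((1 - p) / p) / 2)
  rw [cosh_eq, cosh_eq, sub_div, exp_sub, neg_sub, sub_div, exp_sub, exp_neg (log _ / 2)]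
  have h1 : exp (t * (1 - p)) = exp (t * (1 - 2 * p) / 2) * exp (t / 2) := by
    rw [← exp_add]; ring_nf
  have h2 : exp (-(t * p)) = exp (t * (1 - 2 * p) / 2) / exp (t / 2) := by
    rw [← exp_sub]; ring_nf
  rw [h1, h2]
  field_simp
  rw [ha]
  field_simp
  ring

theorem kearnsSaul_moment_bound :
    ∀ p ∈ Set.Ioo (0 : ℝ) 1, ∀ α s : ℝ,
      p * Real.exp (s * α * (1 - p)) + (1 - p) * Real.exp (-(s * α * p)) ≤
        Real.exp (s ^ 2 * α ^ 2 * kearnsSaulPhi p / 4) := by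
  intro p hp α s
  rw [kearnsSaulPhi, ← mul_pow]
  split_ifs with hhalf
  · subst hhalf
    calc _ = cosh (s * α / 2) := by rw [cosh_eq]; ring_nf
      _ ≤ exp ((s * α / 2) ^ 2 / 2) := cosh_le_exp_half_sq _
      _ = _ := by ring_nf
  · have hw : log ((1 - p) / p) ≠ 0 := by
      obtain ⟨hp0, hp1⟩ := hp
      refine log_ne_zero_of_pos_of_ne_one (div_pos (sub_pos.2 hp1) hp0) fun h => hhalf ?_
      rw [div_eq_one_iff_eq hp0.ne'] at h
      linarith
    rw [bernoulli_mgf_eq_cosh hp, ← tanh_half_log_one_sub_div hp]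
    exact exp_mul_tanh_half_mul_cosh_le hw (s * α)
end

section
/- (Kearns–Saul concentration) Let R_1,…,R_n be independent with R_j ~ Bernoulli(1-p_j), p_j ∈ (0,1), and let α_1,…,α_n ∈ ℝ. Set χ² = Σ_j α_j² Φ(p_j) with Φ(x) = (1-2x)/log((1-x)/x) (Φ(1/2)=1/2). Then for all t > 0, P(|Σ_j α_j (R_j - (1-p_j))| > t) ≤ 2 exp(-t²/χ²). -/
open MeasureTheory ProbabilityTheory

/-!
The Kearns–Saul inequality bounds the cumulant generating function of the centred variable
`X - (1 - p)`, `X ~ Bernoulli(1 - p)`: `log (p + (1 - p) eˢ) - (1 - p) s ≤ Φ(p) s² / 4`. Given it,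
each summand `αⱼ (Rⱼ - (1 - pⱼ))` is sub-Gaussian with variance proxy `αⱼ² Φ(pⱼ) / 2`, and
Chernoff's bound for sums of independent sub-Gaussian variables, applied to both tails, gives the
theorem.

For the inequality let `G` be the gap between its two sides and `m = log (p / (1 - p))`. The value
`Φ(p)` is exactly the coefficient for which `G` is symmetric about `m`. For `p < 1/2` we have
`m < 0`; on `[m, ∞)` the derivative `G'` is convex and vanishes at `m` and at `0`, so `G` decreases
on `[m, 0]` and increases on `[0, ∞)`, whence `G ≥ G 0 = 0` there, and everywhere by the symmetry.
The case `p > 1/2` follows by exchanging `p` and `1 - p`, and `p = 1/2` is `cosh x ≤ exp (x² / 2)`.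
-/

open Real Set

section KearnsSaulInequality

variable {p : ℝ}

lemma kearnsSaulPhi_one_sub (p : ℝ) : kearnsSaulPhi (1 - p) = kearnsSaulPhi p := by
  unfold kearnsSaulPhi
  by_cases hp : p = 1 / 2
  · norm_num [hp]
  · rw [if_neg (by contrapose! hp; linarith), if_neg hp, sub_sub_cancel, ← inv_div (1 - p) p,
      log_inv]
    ring

lemma kearnsSaulPhi_mul_log (hp0 : 0 < p) (hp1 : p < 1) :
    kearnsSaulPhi p * log (p / (1 - p)) = 2 * p - 1 := by
  unfold kearnsSaulPhi
  by_cases hp : p = 1 / 2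
  · norm_num [hp]
  · have hlog : log ((1 - p) / p) ≠ 0 := by
      refine log_ne_zero_of_pos_of_ne_one (div_pos (by linarith) hp0) ?_
      rw [ne_eq, div_eq_one_iff_eq hp0.ne']
      contrapose! hp
      linarith
    rw [if_neg hp, ← inv_div (1 - p) p, log_inv]
    field_simp
    ring

lemma kearnsSaulPhi_nonneg (hp0 : 0 < p) (hp1 : p < 1) : 0 ≤ kearnsSaulPhi p := by
  unfold kearnsSaulPhi
  split_ifs with hp
  · norm_num
  rcases lt_or_gt_of_ne hp with hp | hp
  · exact div_nonneg (by linarith) (log_nonneg (by rw [le_div_iff₀ hp0]; linarith))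
  · exact div_nonneg_of_nonpos (by linarith)
      (log_nonpos (div_nonneg (by linarith) hp0.le) (by rw [div_le_one hp0]; linarith))

noncomputable def kearnsSaulGap (p s : ℝ) : ℝ :=
  kearnsSaulPhi p / 4 * s ^ 2 + (1 - p) * s - log (p + (1 - p) * exp s)

noncomputable def kearnsSaulGapDeriv (p s : ℝ) : ℝ :=
  kearnsSaulPhi p / 2 * s + (1 - p) - (1 - p) * exp s / (p + (1 - p) * exp s)

noncomputable def kearnsSaulGapDeriv2 (p s : ℝ) : ℝ :=
  kearnsSaulPhi p / 2 - p * (1 - p) * exp s / (p + (1 - p) * exp s) ^ 2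

lemma add_one_sub_mul_exp_pos (hp0 : 0 < p) (hp1 : p < 1) (s : ℝ) :
    0 < p + (1 - p) * exp s := by
  have : 0 < 1 - p := by linarith
  positivity

lemma hasDerivAt_kearnsSaulGap (hp0 : 0 < p) (hp1 : p < 1) (s : ℝ) :
    HasDerivAt (kearnsSaulGap p) (kearnsSaulGapDeriv p s) s := by
  have hden := ((hasDerivAt_exp s).const_mul (1 - p)).const_add p
  have hlog := hden.log (add_one_sub_mul_exp_pos hp0 hp1 s).ne'
  have hquad := ((hasDerivAt_pow 2 s).const_mul (kearnsSaulPhi p / 4)).add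
    ((hasDerivAt_id s).const_mul (1 - p))
  exact (hquad.sub hlog).congr_deriv (by simp only [kearnsSaulGapDeriv]; ring)

lemma hasDerivAt_kearnsSaulGapDeriv (hp0 : 0 < p) (hp1 : p < 1) (s : ℝ) :
    HasDerivAt (kearnsSaulGapDeriv p) (kearnsSaulGapDeriv2 p s) s := by
  have hden := ((hasDerivAt_exp s).const_mul (1 - p)).const_add p
  have hpos := add_one_sub_mul_exp_pos hp0 hp1 s
  have hquot := ((hasDerivAt_exp s).const_mul (1 - p)).div hden hpos.ne'
  have hlin := ((hasDerivAt_id s).const_mul (kearnsSaulPhi p / 2)).add_const (1 - p)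
  refine (hlin.sub hquot).congr_deriv ?_
  simp only [kearnsSaulGapDeriv2]
  field_simp
  ring

lemma kearnsSaulGap_zero : kearnsSaulGap p 0 = 0 := by
  simp [kearnsSaulGap]

lemma kearnsSaulGapDeriv_zero : kearnsSaulGapDeriv p 0 = 0 := by
  simp [kearnsSaulGapDeriv]

lemma kearnsSaulGapDeriv_log (hp0 : 0 < p) (hp1 : p < 1) :
    kearnsSaulGapDeriv p (log (p / (1 - p))) = 0 := by
  have hq : 1 - p ≠ 0 := by linarith
  have hΦ := kearnsSaulPhi_mul_log hp0 hp1
  rw [kearnsSaulGapDeriv, exp_log (div_pos hp0 (by linarith)), mul_div_cancel₀ _ hq]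
  have hhalf : p / (p + p) = 1 / 2 := by field_simp; ring
  rw [hhalf]
  linear_combination hΦ / 2

lemma monotoneOn_kearnsSaulGapDeriv2 (hp0 : 0 < p) (hp1 : p < 1) :
    MonotoneOn (kearnsSaulGapDeriv2 p) (Ici (log (p / (1 - p)))) := by
  intro x hx y _ hxy
  have hq : 0 < 1 - p := by linarith
  have hpx : p ≤ (1 - p) * exp x := by
    rw [← div_le_iff₀' hq, ← exp_log (div_pos hp0 hq)]
    exact exp_le_exp.mpr hx
  have hexy : exp x ≤ exp y := exp_le_exp.mpr hxy
  have hqxy : p ^ 2 ≤ (1 - p) * exp x * ((1 - p) * exp y) := by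
    nlinarith [mul_le_mul_of_nonneg_left hexy hq.le]
  simp only [kearnsSaulGapDeriv2, sub_le_sub_iff_left]
  rw [div_le_div_iff₀ (by positivity) (by positivity)]
  nlinarith [mul_nonneg (sub_nonneg.mpr hexy) (sub_nonneg.mpr hqxy), exp_pos x, exp_pos y,
    mul_pos hp0 hq]

lemma convexOn_kearnsSaulGapDeriv (hp0 : 0 < p) (hp1 : p < 1) :
    ConvexOn ℝ (Ici (log (p / (1 - p)))) (kearnsSaulGapDeriv p) := by
  have hderiv : deriv (kearnsSaulGapDeriv p) = kearnsSaulGapDeriv2 p :=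
    funext fun s ↦ (hasDerivAt_kearnsSaulGapDeriv hp0 hp1 s).deriv
  refine MonotoneOn.convexOn_of_deriv (convex_Ici _) ?_ ?_ ?_
  · exact fun s _ ↦ (hasDerivAt_kearnsSaulGapDeriv hp0 hp1 s).continuousAt.continuousWithinAt
  · exact fun s _ ↦
      (hasDerivAt_kearnsSaulGapDeriv hp0 hp1 s).differentiableAt.differentiableWithinAt
  · rw [hderiv]
    exact (monotoneOn_kearnsSaulGapDeriv2 hp0 hp1).mono interior_subset

lemma kearnsSaulGap_two_mul_log_sub (hp0 : 0 < p) (hp1 : p < 1) (s : ℝ) :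
    kearnsSaulGap p (2 * log (p / (1 - p)) - s) = kearnsSaulGap p s := by
  have hΦ := kearnsSaulPhi_mul_log hp0 hp1
  set m := log (p / (1 - p)) with hm
  have hq : 0 < 1 - p := by linarith
  have hden :
      p + (1 - p) * exp (2 * m - s) = p / (1 - p) * exp (-s) * (p + (1 - p) * exp s) := by
    rw [show 2 * m - s = m + m + -s by ring, exp_add, exp_add, hm, exp_log (div_pos hp0 hq),
      exp_neg]
    field_simp
    ring
  rw [kearnsSaulGap, kearnsSaulGap, hden,
    log_mul (by positivity) (add_one_sub_mul_exp_pos hp0 hp1 s).ne',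
    log_mul (div_pos hp0 hq).ne' (exp_pos _).ne', log_exp, ← hm]
  linear_combination (m - s) * hΦ

lemma kearnsSaulGap_nonneg_of_log_le (hp0 : 0 < p) (hp : p < 1 / 2) {s : ℝ}
    (hs : log (p / (1 - p)) ≤ s) : 0 ≤ kearnsSaulGap p s := by
  have hp1 : p < 1 := by linarith
  have hconv := convexOn_kearnsSaulGapDeriv hp0 hp1
  have hzero_m := kearnsSaulGapDeriv_log hp0 hp1
  have hm0 : log (p / (1 - p)) < 0 :=
    log_neg (div_pos hp0 (by linarith)) (by rw [div_lt_one (by linarith)]; linarith)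
  set m := log (p / (1 - p))
  have hderiv (x : ℝ) (D : Set ℝ) :
      HasDerivWithinAt (kearnsSaulGap p) (kearnsSaulGapDeriv p x) D x :=
    (hasDerivAt_kearnsSaulGap hp0 hp1 x).hasDerivWithinAt
  have hcont (D : Set ℝ) : ContinuousOn (kearnsSaulGap p) D :=
    fun x _ ↦ (hasDerivAt_kearnsSaulGap hp0 hp1 x).continuousAt.continuousWithinAt
  rcases le_total s 0 with hs0 | hs0
  · have hanti : AntitoneOn (kearnsSaulGap p) (Icc m 0) := by
      refine antitoneOn_of_hasDerivWithinAt_nonpos (convex_Icc m 0) (hcont _)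
        (fun x _ ↦ hderiv x _) fun x hx ↦ ?_
      rw [interior_Icc] at hx
      have := hconv.le_on_segment (x := m) (y := 0) self_mem_Ici hm0.le
        (by rw [segment_eq_Icc hm0.le]; exact Ioo_subset_Icc_self hx)
      simpa [hzero_m, kearnsSaulGapDeriv_zero] using this
    simpa [kearnsSaulGap_zero] using hanti ⟨hs, hs0⟩ ⟨hm0.le, le_rfl⟩ hs0
  · have hmono : MonotoneOn (kearnsSaulGap p) (Ici 0) := by
      refine monotoneOn_of_hasDerivWithinAt_nonneg (convex_Ici 0) (hcont _)
        (fun x _ ↦ hderiv x _) fun x hx ↦ ?_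
      rw [interior_Ici] at hx
      have := hconv.le_right_of_left_le'' (x := m) (y := 0) (z := x) self_mem_Ici
        (mem_Ici.mpr (hm0.le.trans hx.le)) hm0 hx.le (by rw [hzero_m, kearnsSaulGapDeriv_zero])
      rwa [kearnsSaulGapDeriv_zero] at this
    simpa [kearnsSaulGap_zero] using hmono self_mem_Ici hs0 hs0

lemma kearnsSaulGap_nonneg (hp0 : 0 < p) (hp : p < 1 / 2) (s : ℝ) : 0 ≤ kearnsSaulGap p s := by
  rcases le_total (log (p / (1 - p))) s with hs | hs
  · exact kearnsSaulGap_nonneg_of_log_le hp0 hp hs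
  · rw [← kearnsSaulGap_two_mul_log_sub hp0 (by linarith) s]
    exact kearnsSaulGap_nonneg_of_log_le hp0 hp (by linarith)

lemma kearnsSaul_inequality_of_lt_half (hp0 : 0 < p) (hp : p < 1 / 2) (t : ℝ) :
    p * exp (-(1 - p) * t) + (1 - p) * exp (p * t) ≤ exp (kearnsSaulPhi p * t ^ 2 / 4) := by
  have hpos := add_one_sub_mul_exp_pos hp0 (by linarith) t
  have hlog : log (p + (1 - p) * exp t) ≤ kearnsSaulPhi p / 4 * t ^ 2 + (1 - p) * t := by
    have := kearnsSaulGap_nonneg hp0 hp t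
    rw [kearnsSaulGap] at this
    linarith
  calc p * exp (-(1 - p) * t) + (1 - p) * exp (p * t)
      = (p + (1 - p) * exp t) * exp (-((1 - p) * t)) := by
        rw [add_mul, mul_assoc, ← exp_add]; ring_nf
    _ ≤ exp (kearnsSaulPhi p / 4 * t ^ 2 + (1 - p) * t) * exp (-((1 - p) * t)) := by
        gcongr
        rwa [← exp_log hpos, exp_le_exp]
    _ = exp (kearnsSaulPhi p * t ^ 2 / 4) := by
        rw [← exp_add]; ring_nf

theorem kearnsSaul_inequality (hp0 : 0 < p) (hp1 : p < 1) (t : ℝ) :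
    p * exp (-(1 - p) * t) + (1 - p) * exp (p * t) ≤ exp (kearnsSaulPhi p * t ^ 2 / 4) := by
  rcases lt_trichotomy p (1 / 2) with hp | rfl | hp
  · exact kearnsSaul_inequality_of_lt_half hp0 hp t
  · have := cosh_le_exp_half_sq (t / 2)
    rw [cosh_eq] at this
    norm_num [kearnsSaulPhi]
    convert this using 2 <;> ring_nf
  · have := kearnsSaul_inequality_of_lt_half (p := 1 - p) (by linarith) (by linarith) (-t)
    rw [kearnsSaulPhi_one_sub, sub_sub_cancel] at this
    convert this using 1 <;> ring_nf

end KearnsSaulInequality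

structure IsBernoulli {Ω : Type*} [MeasurableSpace Ω] (μ : Measure Ω) (X : Ω → ℝ) (r : ℝ) :
    Prop where
  measurable : Measurable X
  measure_eq_one : μ {ω | X ω = 1} = ENNReal.ofReal r
  measure_eq_zero : μ {ω | X ω = 0} = ENNReal.ofReal (1 - r)

namespace IsBernoulli

variable {Ω : Type*} [MeasurableSpace Ω] {μ : Measure Ω} [IsProbabilityMeasure μ]
  {X : Ω → ℝ} {r : ℝ}

lemma mem_Icc (hX : IsBernoulli μ X r) : r ∈ Icc 0 1 := by
  have h1 := hX.measure_eq_one ▸ prob_le_one (μ := μ) (s := {ω | X ω = 1})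
  have h0 := hX.measure_eq_zero ▸ prob_le_one (μ := μ) (s := {ω | X ω = 0})
  rw [ENNReal.ofReal_le_one] at h0 h1
  exact ⟨by linarith, h1⟩

lemma ae_eq_zero_or_eq_one (hX : IsBernoulli μ X r) : ∀ᵐ ω ∂μ, X ω = 0 ∨ X ω = 1 := by
  have hmeas (a : ℝ) : MeasurableSet {ω | X ω = a} := hX.measurable (measurableSet_singleton a)
  have hunion : μ ({ω | X ω = 0} ∪ {ω | X ω = 1}) = 1 := by
    rw [measure_union _ (hmeas 1), hX.measure_eq_zero, hX.measure_eq_one,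
      ← ENNReal.ofReal_add (by linarith [hX.mem_Icc.2]) hX.mem_Icc.1]
    · norm_num
    · exact Set.disjoint_left.mpr fun ω h0 h1 ↦ zero_ne_one (h0.symm.trans h1)
  exact (mem_ae_iff_prob_eq_one ((hmeas 0).union (hmeas 1))).mpr hunion

lemma comp_ae_eq_indicator (hX : IsBernoulli μ X r) (f : ℝ → ℝ) :
    (fun ω ↦ f (X ω)) =ᵐ[μ] fun ω ↦
      {ω | X ω = 0}.indicator (fun _ ↦ f 0) ω + {ω | X ω = 1}.indicator (fun _ ↦ f 1) ω := by
  filter_upwards [hX.ae_eq_zero_or_eq_one] with ω hω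
  rcases hω with h | h <;> simp [h]

lemma integrable_comp (hX : IsBernoulli μ X r) (f : ℝ → ℝ) : Integrable (fun ω ↦ f (X ω)) μ :=
  (((integrable_const _).indicator (hX.measurable (measurableSet_singleton 0))).add
    ((integrable_const _).indicator (hX.measurable (measurableSet_singleton 1)))).congr
    (hX.comp_ae_eq_indicator f).symm

lemma integral_comp (hX : IsBernoulli μ X r) (f : ℝ → ℝ) :
    ∫ ω, f (X ω) ∂μ = (1 - r) * f 0 + r * f 1 := by
  have hmeas (a : ℝ) : MeasurableSet {ω | X ω = a} := hX.measurable (measurableSet_singleton a)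
  rw [integral_congr_ae (hX.comp_ae_eq_indicator f),
    integral_add ((integrable_const _).indicator (hmeas 0))
      ((integrable_const _).indicator (hmeas 1)),
    integral_indicator_const _ (hmeas 0), integral_indicator_const _ (hmeas 1),
    measureReal_def, measureReal_def, hX.measure_eq_zero, hX.measure_eq_one,
    ENNReal.toReal_ofReal (by linarith [hX.mem_Icc.2]), ENNReal.toReal_ofReal hX.mem_Icc.1,
    smul_eq_mul, smul_eq_mul]

lemma hasSubgaussianMGF_kearnsSaul {p : ℝ} (hX : IsBernoulli μ X (1 - p)) (hp0 : 0 < p)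
    (hp1 : p < 1) :
    HasSubgaussianMGF (fun ω ↦ X ω - (1 - p))
      ⟨kearnsSaulPhi p / 2, by linarith [kearnsSaulPhi_nonneg hp0 hp1]⟩ μ where
  integrable_exp_mul t := hX.integrable_comp fun x ↦ exp (t * (x - (1 - p)))
  mgf_le t := by
    rw [mgf, hX.integral_comp fun x ↦ exp (t * (x - (1 - p))), sub_sub_cancel]
    change _ ≤ exp (kearnsSaulPhi p / 2 * t ^ 2 / 2)
    convert kearnsSaul_inequality hp0 hp1 t using 1 <;> ring_nf

end IsBernoulli

lemma ProbabilityTheory.HasSubgaussianMGF.measure_abs_gt_le {Ω : Type*} [MeasurableSpace Ω]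
    {μ : Measure Ω} [IsFiniteMeasure μ] {X : Ω → ℝ} {c : NNReal} (h : HasSubgaussianMGF X c μ)
    {ε : ℝ} (hε : 0 ≤ ε) :
    μ {ω | ε < |X ω|} ≤ ENNReal.ofReal (2 * exp (-ε ^ 2 / (2 * c))) := by
  have htail (Y : Ω → ℝ) (hY : HasSubgaussianMGF Y c μ) :
      μ {ω | ε ≤ Y ω} ≤ ENNReal.ofReal (exp (-ε ^ 2 / (2 * c))) := by
    rw [← ofReal_measureReal]
    exact ENNReal.ofReal_le_ofReal (hY.measure_ge_le hε)
  calc μ {ω | ε < |X ω|}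
      ≤ μ ({ω | ε ≤ X ω} ∪ {ω | ε ≤ (-X) ω}) :=
        measure_mono fun ω (hω : ε < |X ω|) ↦ le_abs.mp hω.le
    _ ≤ μ {ω | ε ≤ X ω} + μ {ω | ε ≤ (-X) ω} := measure_union_le _ _
    _ ≤ ENNReal.ofReal (exp (-ε ^ 2 / (2 * c))) + ENNReal.ofReal (exp (-ε ^ 2 / (2 * c))) :=
        add_le_add (htail X h) (htail _ h.neg)
    _ = ENNReal.ofReal (2 * exp (-ε ^ 2 / (2 * c))) := by
        rw [← ENNReal.ofReal_add (exp_pos _).le (exp_pos _).le, ← two_mul]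

theorem kearnsSaul_concentration
    {Ω : Type*} [MeasurableSpace Ω] (μ : Measure Ω) [IsProbabilityMeasure μ]
    (n : ℕ) (p : Fin n → ℝ) (hp : ∀ j, p j ∈ Set.Ioo (0 : ℝ) 1)
    (R : Fin n → Ω → ℝ) (hR : ∀ j, Measurable (R j))
    (hindep : iIndepFun R μ)
    (h1 : ∀ j, μ {ω | R j ω = 1} = ENNReal.ofReal (1 - p j))
    (h0 : ∀ j, μ {ω | R j ω = 0} = ENNReal.ofReal (p j))
    (α : Fin n → ℝ) :
    ∀ t : ℝ, 0 < t →
      μ {ω | t < |∑ j, α j * (R j ω - (1 - p j))|} ≤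
        ENNReal.ofReal (2 * Real.exp (-t ^ 2 / ∑ j, (α j) ^ 2 * kearnsSaulPhi (p j))) := by
  intro t ht
  have hbern (j : Fin n) : IsBernoulli μ (R j) (1 - p j) :=
    ⟨hR j, h1 j, by rw [sub_sub_cancel]; exact h0 j⟩
  have hsum : HasSubgaussianMGF (fun ω ↦ ∑ j, α j * (R j ω - (1 - p j))) _ μ :=
    HasSubgaussianMGF.sum_of_iIndepFun (s := Finset.univ)
      (hindep.comp (fun j x ↦ α j * (x - (1 - p j)))
        fun j ↦ (measurable_id.sub_const _).const_mul _)
      fun j _ ↦ ((hbern j).hasSubgaussianMGF_kearnsSaul (hp j).1 (hp j).2).const_mul (α j)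
  convert hsum.measure_abs_gt_le ht.le using 5
  rw [NNReal.coe_sum, Finset.mul_sum]
  refine Finset.sum_congr rfl fun j _ ↦ ?_
  change _ = 2 * (α j ^ 2 * (kearnsSaulPhi (p j) / 2))
  ring
end

section
/- Let δ_1,…,δ_n be i.i.d. Bernoulli(1-p) with p ∈ (0,1)\{1/2}, c_1,…,c_n real constants, and h = Σ_j (1 - δ_j/(1-p)) c_j. Then for every γ ∈ (0,1), with probability at least 1-γ, |h| ≤ (√Φ(p)/(1-p)) · √(Σ_j c_j²) · √(log(2/γ)), where Φ(p) = (1-2p)/log((1-p)/p). -/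
/-!
Write `1 - 2q = tanh V`. Then the moment generating function of a centred Bernoulli(`q`)
variable factors as `q e^{s(1-q)} + (1-q) e^{-sq} = e^{s tanh V / 2} cosh (s/2 - V) / cosh V`,
and the Kearns–Saul bound `≤ exp (Φ(q) s² / 4)` becomes the statement that
`v ↦ log cosh v - (tanh V / 2V) v²` is maximal at `v = ±V`; this holds because `tanh x / x`
decreases on `(0, ∞)`, `tanh` being concave there. Hence the summand
`(1 - δ_j / (1-p)) c_j = -(c_j / (1-p)) (δ_j - (1-p))` is sub-Gaussian with variance proxy
`c_j² Φ(p) / (2 (1-p)²)`, the independent sum is sub-Gaussian with the summed proxy, and a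
Chernoff bound of `γ / 2` on each tail gives the result.
-/

open MeasureTheory ProbabilityTheory Real Set

namespace Real

theorem hasDerivAt_tanh_s12 (x : ℝ) : HasDerivAt tanh (1 / cosh x ^ 2) x := by
  have h := (hasDerivAt_sinh x).div (hasDerivAt_cosh x) (cosh_pos x).ne'
  rw [show sinh / cosh = tanh from funext fun y => (tanh_eq_sinh_div_cosh y).symm] at h
  exact h.congr_deriv (by rw [← cosh_sq_sub_sinh_sq x]; ring)

theorem concaveOn_tanh_Ici : ConcaveOn ℝ (Ici 0) tanh := by
  refine AntitoneOn.concaveOn_of_deriv (convex_Ici 0)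
    (fun x _ => (hasDerivAt_tanh_s12 x).continuousAt.continuousWithinAt)
    (fun x _ => (hasDerivAt_tanh_s12 x).differentiableAt.differentiableWithinAt) ?_
  intro x hx y hy hxy
  rw [interior_Ici] at hx hy
  rw [(hasDerivAt_tanh_s12 x).deriv, (hasDerivAt_tanh_s12 y).deriv]
  have hc : cosh x ≤ cosh y := cosh_le_cosh.2 (by rw [abs_of_pos hx, abs_of_pos hy]; exact hxy)
  gcongr

theorem antitoneOn_tanh_div : AntitoneOn (fun x => tanh x / x) (Ioi 0) := by
  intro x (hx : 0 < x) y (hy : 0 < y) hxy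
  have h := concaveOn_tanh_Ici.antitoneOn_slope_gt self_mem_Ici
    (show x ∈ {y ∈ Ici 0 | 0 < y} from ⟨hx.le, hx⟩) ⟨hy.le, hy⟩ hxy
  simpa [slope_def_field] using h

theorem log_cosh_sub_mul_sq_le {V : ℝ} (hV : V ≠ 0) (v : ℝ) :
    log (cosh v) - tanh V / (2 * V) * v ^ 2 ≤ log (cosh V) - tanh V / (2 * V) * V ^ 2 := by
  wlog hv : 0 ≤ v generalizing v
  · simpa using this (-v) (by linarith)
  wlog hV0 : 0 < V generalizing V
  · have h := this (neg_ne_zero.2 hV) (neg_pos.2 (lt_of_le_of_ne (not_lt.1 hV0) hV))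
    simpa [tanh_neg, neg_div_neg_eq] using h
  set b := tanh V / (2 * V)
  set G : ℝ → ℝ := fun u => log (cosh u) - b * u ^ 2
  have hG : ∀ u, HasDerivAt G (tanh u - 2 * b * u) u := fun u =>
    (((hasDerivAt_cosh u).log (cosh_pos u).ne').sub ((hasDerivAt_pow 2 u).const_mul b)).congr_deriv
      (by rw [tanh_eq_sinh_div_cosh]; ring)
  have hGc : Continuous G := continuous_iff_continuousAt.2 fun u => (hG u).continuousAt
  have h2b : 2 * b = tanh V / V := by simp only [b]; field_simp
  have hmono : MonotoneOn G (Icc 0 V) := by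
    refine monotoneOn_of_hasDerivWithinAt_nonneg (convex_Icc 0 V) hGc.continuousOn
      (fun u _ => (hG u).hasDerivWithinAt) fun u hu => ?_
    rw [interior_Icc] at hu
    have h := antitoneOn_tanh_div hu.1 hV0 hu.2.le
    rw [h2b, sub_nonneg]
    simpa [le_div_iff₀ hu.1] using h
  have hanti : AntitoneOn G (Ici V) := by
    refine antitoneOn_of_hasDerivWithinAt_nonpos (convex_Ici V) hGc.continuousOn
      (fun u _ => (hG u).hasDerivWithinAt) fun u hu => ?_
    rw [interior_Ici] at hu
    have hu0 : 0 < u := hV0.trans hu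
    have h := antitoneOn_tanh_div hV0 hu0 hu.le
    rw [h2b, sub_nonpos]
    simpa [div_le_iff₀ hu0] using h
  rcases le_total v V with h | h
  · exact hmono ⟨hv, h⟩ ⟨hV0.le, le_rfl⟩ h
  · exact hanti self_mem_Ici h h

theorem cosh_sub_eq_cosh_mul_exp (a V : ℝ) :
    cosh (a - V) = cosh V * ((1 - tanh V) / 2 * exp a + (1 + tanh V) / 2 * exp (-a)) := by
  rw [cosh_sub, cosh_eq, sinh_eq, tanh_eq_sinh_div_cosh]
  field_simp
  ring

end Real

/-- The constant `Φ(p)` of the paper. -/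
noncomputable def kearnsSaulConst (q : ℝ) : ℝ := (1 - 2 * q) / log ((1 - q) / q)

theorem kearnsSaulConst_one_sub (q : ℝ) : kearnsSaulConst (1 - q) = kearnsSaulConst q := by
  rw [kearnsSaulConst, kearnsSaulConst, sub_sub_cancel, ← inv_div (1 - q) q, log_inv]
  ring

theorem kearnsSaulConst_nonneg {q : ℝ} (hq : q ∈ Ioo 0 1) : 0 ≤ kearnsSaulConst q := by
  obtain ⟨hq0, hq1⟩ := hq
  rcases le_total q (1 / 2) with h | h
  · exact div_nonneg (by linarith) (log_nonneg (by rw [le_div_iff₀ hq0]; linarith))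
  · exact div_nonneg_of_nonpos (by linarith)
      (log_nonpos (div_nonneg (by linarith) hq0.le) (by rw [div_le_iff₀ hq0]; linarith))

theorem kearnsSaul_of_tanh_eq {q V : ℝ} (hV : V ≠ 0) (hq : tanh V = 1 - 2 * q) (s : ℝ) :
    q * exp (s * (1 - q)) + (1 - q) * exp (-(s * q)) ≤ exp (tanh V / (8 * V) * s ^ 2) := by
  have hq' : q = (1 - tanh V) / 2 := by linarith
  have hmgf : q * exp (s * (1 - q)) + (1 - q) * exp (-(s * q)) =
      exp (s * tanh V / 2 + log (cosh (s / 2 - V)) - log (cosh V)) := by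
    rw [exp_sub, exp_add, exp_log (cosh_pos _), exp_log (cosh_pos _), cosh_sub_eq_cosh_mul_exp,
      hq', show s * (1 - (1 - tanh V) / 2) = s * tanh V / 2 + s / 2 by ring,
      show -(s * ((1 - tanh V) / 2)) = s * tanh V / 2 + -(s / 2) by ring, exp_add, exp_add]
    field_simp [(cosh_pos V).ne']
    ring
  have hquad : tanh V / (8 * V) * s ^ 2 = tanh V / (2 * V) * (s / 2 - V) ^ 2
      + tanh V * (s / 2 - V) + tanh V / (2 * V) * V ^ 2 := by
    field_simp
    ring
  have hsq : tanh V / (2 * V) * V ^ 2 = tanh V * V / 2 := by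
    field_simp
  rw [hmgf, exp_le_exp]
  linarith [log_cosh_sub_mul_sq_le hV (s / 2 - V)]

theorem kearnsSaul {q : ℝ} (hq : q ∈ Ioo 0 1) (hq2 : q ≠ 1 / 2) (s : ℝ) :
    q * exp (s * (1 - q)) + (1 - q) * exp (-(s * q)) ≤ exp (kearnsSaulConst q / 4 * s ^ 2) := by
  obtain ⟨hq0, hq1⟩ := hq
  have hθ : 1 - 2 * q ∈ Ioo (-1) 1 := ⟨by linarith, by linarith⟩
  set V := artanh (1 - 2 * q) with hVdef
  have htanh : tanh V = 1 - 2 * q := tanh_artanh hθ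
  have hV : V ≠ 0 := fun h => hq2 (by rw [h, tanh_zero] at htanh; linarith)
  have hlog : log ((1 - q) / q) = 2 * V := by
    rw [hVdef, artanh_eq_half_log (Ioo_subset_Icc_self hθ),
      show (1 + (1 - 2 * q)) / (1 - (1 - 2 * q)) = (1 - q) / q by field_simp; ring]
    ring
  have hconst : kearnsSaulConst q / 4 = tanh V / (8 * V) := by
    rw [kearnsSaulConst, hlog, htanh]
    ring
  rw [hconst]
  exact kearnsSaul_of_tanh_eq hV htanh s

section Bernoulli

variable {Ω : Type*} [MeasurableSpace Ω] {μ : Measure Ω} {δ : Ω → ℝ} {q : ℝ}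

theorem ae_eq_one_or_eq_zero_of_bernoulli [IsProbabilityMeasure μ] (hq : q ∈ Icc 0 1)
    (hδ : Measurable δ) (h1 : μ {ω | δ ω = 1} = ENNReal.ofReal q)
    (h0 : μ {ω | δ ω = 0} = ENNReal.ofReal (1 - q)) :
    ∀ᵐ ω ∂μ, δ ω = 1 ∨ δ ω = 0 := by
  have hdisj : Disjoint {ω | δ ω = 1} {ω | δ ω = 0} :=
    Set.disjoint_left.2 fun ω (hω1 : δ ω = 1) (hω0 : δ ω = 0) => one_ne_zero (hω1.symm.trans hω0)
  have hunion : μ ({ω | δ ω = 1} ∪ {ω | δ ω = 0}) = 1 := by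
    rw [measure_union hdisj (hδ (measurableSet_singleton 0)), h1, h0,
      ← ENNReal.ofReal_add hq.1 (by linarith [hq.2])]
    simp
  exact mem_ae_iff.2 ((prob_compl_eq_zero_iff
    ((hδ (measurableSet_singleton 1)).union (hδ (measurableSet_singleton 0)))).2 hunion)

theorem comp_ae_eq_indicator_add_indicator (hδ01 : ∀ᵐ ω ∂μ, δ ω = 1 ∨ δ ω = 0) (f : ℝ → ℝ) :
    (fun ω => f (δ ω)) =ᵐ[μ] fun ω =>
      {ω | δ ω = 1}.indicator (fun _ => f 1) ω + {ω | δ ω = 0}.indicator (fun _ => f 0) ω := by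
  filter_upwards [hδ01] with ω hω
  rcases hω with h | h <;> simp [h]

theorem integrable_comp_of_ae_eq_one_or_eq_zero [IsFiniteMeasure μ] (hδ : Measurable δ)
    (hδ01 : ∀ᵐ ω ∂μ, δ ω = 1 ∨ δ ω = 0) (f : ℝ → ℝ) :
    Integrable (fun ω => f (δ ω)) μ :=
  (((integrable_const _).indicator (hδ (measurableSet_singleton 1))).add
    ((integrable_const _).indicator (hδ (measurableSet_singleton 0)))).congr
    (comp_ae_eq_indicator_add_indicator hδ01 f).symm

theorem integral_comp_of_bernoulli [IsProbabilityMeasure μ] (hq : q ∈ Icc 0 1)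
    (hδ : Measurable δ) (h1 : μ {ω | δ ω = 1} = ENNReal.ofReal q)
    (h0 : μ {ω | δ ω = 0} = ENNReal.ofReal (1 - q)) (f : ℝ → ℝ) :
    ∫ ω, f (δ ω) ∂μ = q * f 1 + (1 - q) * f 0 := by
  have hA : MeasurableSet {ω | δ ω = 1} := hδ (measurableSet_singleton 1)
  have hB : MeasurableSet {ω | δ ω = 0} := hδ (measurableSet_singleton 0)
  rw [integral_congr_ae (comp_ae_eq_indicator_add_indicator
      (ae_eq_one_or_eq_zero_of_bernoulli hq hδ h1 h0) f),
    integral_add ((integrable_const _).indicator hA) ((integrable_const _).indicator hB),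
    integral_indicator_const _ hA, integral_indicator_const _ hB, measureReal_def,
    measureReal_def, h1, h0, ENNReal.toReal_ofReal hq.1,
    ENNReal.toReal_ofReal (by linarith [hq.2]), smul_eq_mul, smul_eq_mul]

variable [IsProbabilityMeasure μ]

theorem hasSubgaussianMGF_sub_of_bernoulli (hq : q ∈ Ioo 0 1) (hq2 : q ≠ 1 / 2)
    (hδ : Measurable δ) (h1 : μ {ω | δ ω = 1} = ENNReal.ofReal q)
    (h0 : μ {ω | δ ω = 0} = ENNReal.ofReal (1 - q)) :
    HasSubgaussianMGF (fun ω => δ ω - q) (kearnsSaulConst q / 2).toNNReal μ where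
  integrable_exp_mul t := integrable_comp_of_ae_eq_one_or_eq_zero hδ
    (ae_eq_one_or_eq_zero_of_bernoulli (Ioo_subset_Icc_self hq) hδ h1 h0)
    fun x => exp (t * (x - q))
  mgf_le t := by
    rw [mgf, integral_comp_of_bernoulli (Ioo_subset_Icc_self hq) hδ h1 h0
        fun x => exp (t * (x - q)),
      Real.coe_toNNReal _ (div_nonneg (kearnsSaulConst_nonneg hq) zero_le_two)]
    convert kearnsSaul hq hq2 t using 4 <;> ring

theorem hasSubgaussianMGF_one_sub_div_mul_of_bernoulli (hq : q ∈ Ioo 0 1) (hq2 : q ≠ 1 / 2)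
    (hδ : Measurable δ) (h1 : μ {ω | δ ω = 1} = ENNReal.ofReal q)
    (h0 : μ {ω | δ ω = 0} = ENNReal.ofReal (1 - q)) (a : ℝ) :
    HasSubgaussianMGF (fun ω => (1 - δ ω / q) * a)
      ((a / q) ^ 2 * (kearnsSaulConst q / 2)).toNNReal μ := by
  have h := (hasSubgaussianMGF_sub_of_bernoulli hq hq2 hδ h1 h0).const_mul (-(a / q))
  convert h.congr (ae_of_all _ fun ω => ?_) using 1
  · ext
    change (((a / q) ^ 2 * (kearnsSaulConst q / 2)).toNNReal : ℝ)
      = (-(a / q)) ^ 2 * ((kearnsSaulConst q / 2).toNNReal : ℝ)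
    have hΦ := kearnsSaulConst_nonneg hq
    rw [Real.coe_toNNReal _ (by positivity), Real.coe_toNNReal _ (by positivity), neg_sq]
  · field_simp [hq.1.ne']
    ring

end Bernoulli

namespace ProbabilityTheory.HasSubgaussianMGF

variable {Ω : Type*} [MeasurableSpace Ω] {μ : Measure Ω} {X : Ω → ℝ} {c : NNReal}

theorem measure_abs_ge_le [IsFiniteMeasure μ] (h : HasSubgaussianMGF X c μ) {ε : ℝ}
    (hε : 0 ≤ ε) :
    μ {ω | ε ≤ |X ω|} ≤ ENNReal.ofReal (2 * exp (-ε ^ 2 / (2 * c))) := by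
  have hsub : {ω | ε ≤ |X ω|} ⊆ {ω | ε ≤ X ω} ∪ {ω | ε ≤ (-X) ω} := fun ω hω => by
    rcases le_total 0 (X ω) with hX | hX
    · exact Or.inl (by simpa [abs_of_nonneg hX] using hω)
    · exact Or.inr (by simpa [abs_of_nonpos hX] using hω)
  have htail : ∀ {Y : Ω → ℝ}, HasSubgaussianMGF Y c μ →
      μ {ω | ε ≤ Y ω} ≤ ENNReal.ofReal (exp (-ε ^ 2 / (2 * c))) := fun hY => by
    rw [← ofReal_measureReal]
    exact ENNReal.ofReal_le_ofReal (hY.measure_ge_le hε)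
  calc μ {ω | ε ≤ |X ω|}
      ≤ μ {ω | ε ≤ X ω} + μ {ω | ε ≤ (-X) ω} := (measure_mono hsub).trans (measure_union_le _ _)
    _ ≤ ENNReal.ofReal (exp (-ε ^ 2 / (2 * c))) + ENNReal.ofReal (exp (-ε ^ 2 / (2 * c))) :=
      add_le_add (htail h) (htail h.neg)
    _ = ENNReal.ofReal (2 * exp (-ε ^ 2 / (2 * c))) := by
      rw [← ENNReal.ofReal_add (exp_pos _).le (exp_pos _).le, ← two_mul]

theorem ofReal_one_sub_le_measure_abs_le [IsProbabilityMeasure μ] (h : HasSubgaussianMGF X c μ)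
    {γ : ℝ} (hγ0 : 0 < γ) (hγ2 : γ ≤ 2) :
    ENNReal.ofReal (1 - γ) ≤ μ {ω | |X ω| ≤ √(2 * c * log (2 / γ))} := by
  rcases eq_zero_or_pos c with rfl | hc
  · have hfull : {ω | |X ω| ≤ √(2 * (0 : NNReal) * log (2 / γ))} =ᵐ[μ] univ := by
      refine ae_eq_univ.2 (mem_ae_iff.1 ?_)
      filter_upwards [h.ae_eq_zero_of_hasSubgaussianMGF_zero] with ω hω
      simp [hω]
    rw [measure_congr hfull, measure_univ]
    exact ENNReal.ofReal_le_one.2 (by linarith)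
  set ε := √(2 * c * log (2 / γ))
  have hlog : 0 ≤ log (2 / γ) := log_nonneg (by rw [le_div_iff₀ hγ0]; linarith)
  have hexp : 2 * exp (-ε ^ 2 / (2 * c)) = γ := by
    rw [sq_sqrt (by positivity), neg_div, mul_div_cancel_left₀ _ (by positivity), exp_neg,
      exp_log (by positivity), inv_div]
    field_simp
  have hbad := h.measure_abs_ge_le (sqrt_nonneg (2 * c * log (2 / γ)))
  rw [hexp] at hbad
  have hcover : 1 ≤ μ {ω | |X ω| ≤ ε} + μ {ω | ε ≤ |X ω|} := by
    rw [← measure_univ (μ := μ)]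
    exact (measure_mono fun ω _ => le_total |X ω| ε).trans (measure_union_le _ _)
  rw [ENNReal.ofReal_sub _ hγ0.le, ENNReal.ofReal_one, tsub_le_iff_right]
  exact hcover.trans (add_le_add le_rfl hbad)

end ProbabilityTheory.HasSubgaussianMGF

theorem dare_kearnsSaul_bound
    {Ω : Type*} [MeasurableSpace Ω] (μ : Measure Ω) [IsProbabilityMeasure μ]
    (p : ℝ) (hp : p ∈ Set.Ioo (0 : ℝ) 1) (hp2 : p ≠ 1 / 2)
    (n : ℕ) (δ : Fin n → Ω → ℝ) (hδ : ∀ j, Measurable (δ j))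
    (hindep : iIndepFun δ μ)
    (h1 : ∀ j, μ {ω | δ j ω = 1} = ENNReal.ofReal (1 - p))
    (h0 : ∀ j, μ {ω | δ j ω = 0} = ENNReal.ofReal p)
    (c : Fin n → ℝ) (γ : ℝ) (hγ : γ ∈ Set.Ioo (0 : ℝ) 1) :
    ENNReal.ofReal (1 - γ) ≤
      μ {ω | |∑ j, (1 - δ j ω / (1 - p)) * c j| ≤
        (Real.sqrt ((1 - 2 * p) / Real.log ((1 - p) / p)) / (1 - p)) *
          Real.sqrt (∑ j, (c j) ^ 2) * Real.sqrt (Real.log (2 / γ))} := by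
  have hq : 1 - p ∈ Ioo 0 1 := ⟨by linarith [hp.2], by linarith [hp.1]⟩
  have hΦ0 := kearnsSaulConst_nonneg hq
  set σ : Fin n → ℝ := fun j => (c j / (1 - p)) ^ 2 * (kearnsSaulConst (1 - p) / 2)
  have hsum : HasSubgaussianMGF (fun ω => ∑ j, (1 - δ j ω / (1 - p)) * c j)
      (∑ j, (σ j).toNNReal) μ :=
    HasSubgaussianMGF.sum_of_iIndepFun
      (hindep.comp (fun j x => (1 - x / (1 - p)) * c j) fun j => by fun_prop) fun j _ =>
      hasSubgaussianMGF_one_sub_div_mul_of_bernoulli hq (fun h => hp2 (by linarith)) (hδ j)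
        (h1 j) ((h0 j).trans (by ring_nf)) (c j)
  have hradius : √(2 * ↑(∑ j, (σ j).toNNReal) * log (2 / γ))
      = √((1 - 2 * p) / log ((1 - p) / p)) / (1 - p) * √(∑ j, c j ^ 2) * √(log (2 / γ)) := by
    rw [NNReal.coe_sum, Finset.sum_congr rfl fun j _ => Real.coe_toNNReal _ (by positivity),
      show 2 * (∑ j, σ j) * log (2 / γ)
        = kearnsSaulConst (1 - p) * (∑ j, c j ^ 2) * log (2 / γ) / (1 - p) ^ 2 by
        simp only [σ, Finset.mul_sum, Finset.sum_div, Finset.sum_mul]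
        exact Finset.sum_congr rfl fun j _ => by field_simp,
      sqrt_div' _ (sq_nonneg _), sqrt_sq hq.1.le, sqrt_mul (mul_nonneg hΦ0 (by positivity)),
      sqrt_mul hΦ0, kearnsSaulConst_one_sub, kearnsSaulConst]
    ring
  have := hsum.ofReal_one_sub_le_measure_abs_le hγ.1 (by linarith [hγ.2])
  rwa [hradius] at this
end
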